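/- arXiv:1902.00492 — 3 statements merged into one kernel-verified Lean document; each statement's English description precedes it below -/
import Mathlib

section
/- Let a : ℕ → ℕ → ℝ≥0 satisfy the peeling equation a^p_v = a^{p+1}_{v+1} + 2 Σ_{i=0}^{p-1} Σ_{j≥0} c_{i+1,j} a^{p-i}_{v+j} for all v ≥ p ≥ 1, where c_{q,j} ≥ 0 and c_{1,1} = 1 (all sums convergent). Define the discrete difference (Δu)_v = u_v − u_{v+1} acting on the v-variable. Then for every k ≥ 0 and all v ≥ p ≥ 1, (Δ^k a^p)_v ≥ 0; i.e., each sequence v ↦ a^p_v is completely monotone. -/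
/-- Forward difference operator `(Δu)_v = u_v - u_{v+1}`. -/
def fdiff (u : ℕ → ℝ) : ℕ → ℝ := fun v => u v - u (v + 1)

/-- The peeling equation implies complete monotonicity: `(Δ^k a^p)_v ≥ 0` for all
`k ≥ 0` and `v ≥ p ≥ 1`. -/
theorem stmt8 (a c : ℕ → ℕ → ℝ)
    (ha : ∀ p v, 0 ≤ a p v) (hc : ∀ q j, 0 ≤ c q j) (hc11 : c 1 1 = 1)
    (hsum : ∀ p i v : ℕ, Summable fun j : ℕ => c (i + 1) j * a (p - i) (v + j))
    (heq : ∀ p v : ℕ, 1 ≤ p → p ≤ v →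
      a p v = a (p + 1) (v + 1)
        + 2 * ∑ i ∈ Finset.range p, ∑' j : ℕ, c (i + 1) j * a (p - i) (v + j))
    (k p v : ℕ) (hp : 1 ≤ p) (hpv : p ≤ v) :
    0 ≤ (fdiff^[k] (a p)) v := by
  -- summability of the shifted/differenced series
  have hsum' : ∀ (k m i v : ℕ),
      Summable fun j : ℕ => c (i + 1) j * (fdiff^[k] (a m)) (v + j) := by
    intro k
    induction k with
    | zero =>
      intro m i v
      simpa [Nat.add_sub_cancel] using hsum (m + i) i v
    | succ k ih =>
      intro m i v
      have h1 := ih m i v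
      have h2 := ih m i (v + 1)
      have hEq : (fun j : ℕ => c (i + 1) j * (fdiff^[k + 1] (a m)) (v + j)) =
          fun j : ℕ => c (i + 1) j * (fdiff^[k] (a m)) (v + j)
            - c (i + 1) j * (fdiff^[k] (a m)) ((v + 1) + j) := by
        funext j
        rw [Function.iterate_succ_apply']
        have : (v + 1) + j = (v + j) + 1 := by omega
        simp [fdiff, this, mul_sub]
      rw [hEq]
      exact h1.sub h2
  -- the differenced peeling identity
  have hid : ∀ (k p v : ℕ), 1 ≤ p → p ≤ v →
      (fdiff^[k] (a p)) v = (fdiff^[k] (a (p + 1))) (v + 1)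
        + 2 * ∑ i ∈ Finset.range p,
            ∑' j : ℕ, c (i + 1) j * (fdiff^[k] (a (p - i))) (v + j) := by
    intro k
    induction k with
    | zero =>
      intro p v hp hpv
      simpa using heq p v hp hpv
    | succ k ih =>
      intro p v hp hpv
      have h1 := ih p v hp hpv
      have h2 := ih p (v + 1) hp (le_trans hpv (Nat.le_succ v))
      simp only [Function.iterate_succ_apply']
      have hterm : ∀ i : ℕ,
          (∑' j : ℕ, c (i + 1) j * (fdiff (fdiff^[k] (a (p - i)))) (v + j))
            = (∑' j : ℕ, c (i + 1) j * (fdiff^[k] (a (p - i))) (v + j))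
              - (∑' j : ℕ, c (i + 1) j * (fdiff^[k] (a (p - i))) ((v + 1) + j)) := by
        intro i
        rw [← Summable.tsum_sub (hsum' k (p - i) i v) (hsum' k (p - i) i (v + 1))]
        congr 1
        funext j
        have : (v + 1) + j = (v + j) + 1 := by omega
        simp [fdiff, this, mul_sub]
      have hsumrw :
          (∑ i ∈ Finset.range p,
              ∑' j : ℕ, c (i + 1) j * (fdiff (fdiff^[k] (a (p - i)))) (v + j))
            = (∑ i ∈ Finset.range p,
                ∑' j : ℕ, c (i + 1) j * (fdiff^[k] (a (p - i))) (v + j))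
              - ∑ i ∈ Finset.range p,
                ∑' j : ℕ, c (i + 1) j * (fdiff^[k] (a (p - i))) ((v + 1) + j) := by
        rw [← Finset.sum_sub_distrib]
        exact Finset.sum_congr rfl fun i _ => hterm i
      show (fdiff^[k] (a p)) v - (fdiff^[k] (a p)) (v + 1)
          = ((fdiff^[k] (a (p + 1))) (v + 1) - (fdiff^[k] (a (p + 1))) ((v + 1) + 1))
            + 2 * ∑ i ∈ Finset.range p,
                ∑' j : ℕ, c (i + 1) j * (fdiff (fdiff^[k] (a (p - i)))) (v + j)
      rw [hsumrw]
      linarith [h1, h2]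
  -- main induction
  have main : ∀ (k p v : ℕ), 1 ≤ p → p ≤ v → 0 ≤ (fdiff^[k] (a p)) v := by
    intro k
    induction k with
    | zero =>
      intro p v _ _
      simpa using ha p v
    | succ k ih =>
      intro p v hp hpv
      rw [Function.iterate_succ_apply']
      show 0 ≤ (fdiff^[k] (a p)) v - (fdiff^[k] (a p)) (v + 1)
      have key := hid k p v hp hpv
      have hnn : ∀ i, i < p → ∀ j : ℕ, 0 ≤ c (i + 1) j * (fdiff^[k] (a (p - i))) (v + j) :=
        fun i hi j => mul_nonneg (hc _ _)
          (ih (p - i) (v + j) (by omega) (by omega))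
      have h0 : (fdiff^[k] (a (p - 0))) (v + 1)
          ≤ ∑' j : ℕ, c (0 + 1) j * (fdiff^[k] (a (p - 0))) (v + j) := by
        have h := Summable.le_tsum (hsum' k (p - 0) 0 v) 1 (fun j _ => hnn 0 hp j)
        have hc1 : c (0 + 1) 1 = 1 := by simpa using hc11
        simpa [hc1] using h
      have hS : (∑' j : ℕ, c (0 + 1) j * (fdiff^[k] (a (p - 0))) (v + j))
          ≤ ∑ i ∈ Finset.range p,
              ∑' j : ℕ, c (i + 1) j * (fdiff^[k] (a (p - i))) (v + j) := by
        refine Finset.single_le_sum (fun i hi => tsum_nonneg fun j =>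
          hnn i (Finset.mem_range.mp hi) j) (Finset.mem_range.mpr hp)
      have hG : 0 ≤ (fdiff^[k] (a (p + 1))) (v + 1) := ih (p + 1) (v + 1) (by omega) (by omega)
      have hv1 : 0 ≤ (fdiff^[k] (a p)) (v + 1) := ih p (v + 1) hp (by omega)
      simp only [Nat.sub_zero] at h0 hS
      linarith [key, hS, h0, hG, hv1]
  exact main k p v hp hpv
end

section
/- For h ∈ (0, 1/4), set x = √(1−4h). The function d expressed in x, namely x ↦ ((1−x²)/(4x(3−2x²))) · log((1+x)/(1−x)), is strictly decreasing on (0,1). Equivalently, for all 0 < x < 1: (2x⁴ − 3x² + 3)·x·log((1+x)/(1−x)) ≥ 2x²(3 − 2x²). -/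
/-!
Dividing by the positive polynomial `2x⁴ - 3x² + 3` isolates the logarithm: the difference
`log ((1 + x) / (1 - x)) - 2x(3 - 2x²) / (2x⁴ - 3x² + 3)` vanishes at `0` and has the derivative
`8x⁴(3 - 2x²)(2 - x²) / ((1 - x²)(2x⁴ - 3x² + 3)²)`, which is positive on `(0, 1)`. The
derivative of `(1 - x²) / (4x(3 - 2x²)) · log ((1 + x) / (1 - x))` is the negative of the gap in
that inequality divided by `4x²(3 - 2x²)²`, so the function is strictly decreasing.
-/

open Real Set

lemma lt_of_hasDerivAt_pos {f f' : ℝ → ℝ} {a b x : ℝ} (hf : ∀ y ∈ Ico a b, HasDerivAt f (f' y) y)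
    (hf' : ∀ y ∈ Ioo a b, 0 < f' y) (hx : x ∈ Ioo a b) : f a < f x := by
  have hmono : StrictMonoOn f (Ico a b) :=
    strictMonoOn_of_hasDerivWithinAt_pos (convex_Ico a b)
      (fun y hy ↦ (hf y hy).continuousAt.continuousWithinAt)
      (fun y hy ↦ (hf y (interior_subset hy)).hasDerivWithinAt)
      (by simpa only [interior_Ico] using hf')
  exact hmono (left_mem_Ico.2 (hx.1.trans hx.2)) (Ioo_subset_Ico_self hx) hx.1

lemma two_mul_pow_four_sub_three_mul_sq_add_three_pos (x : ℝ) :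
    0 < 2 * x ^ 4 - 3 * x ^ 2 + 3 := by
  nlinarith [sq_nonneg (x ^ 2 - 1)]

lemma hasDerivAt_log_one_add_div_one_sub {x : ℝ} (hx : x ∈ Ioo (-1) 1) :
    HasDerivAt (fun x ↦ log ((1 + x) / (1 - x))) (2 / (1 - x ^ 2)) x := by
  obtain ⟨h₁, h₂⟩ := hx
  have hsub : 1 - x ≠ 0 := by linarith
  have hadd : 1 + x ≠ 0 := by linarith
  have hsq : 1 - x ^ 2 ≠ 0 := by nlinarith
  have hquot := ((hasDerivAt_id' x).const_add 1).fun_div ((hasDerivAt_id' x).const_sub 1) hsub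
  refine (hquot.log (div_ne_zero hadd hsub)).congr_deriv ?_
  field_simp
  ring

lemma hasDerivAt_log_one_add_div_one_sub_sub {x : ℝ} (hx : x ∈ Ioo (-1) 1) :
    HasDerivAt
      (fun x ↦ log ((1 + x) / (1 - x)) - 2 * x * (3 - 2 * x ^ 2) / (2 * x ^ 4 - 3 * x ^ 2 + 3))
      (8 * x ^ 4 * (3 - 2 * x ^ 2) * (2 - x ^ 2) /
        ((1 - x ^ 2) * (2 * x ^ 4 - 3 * x ^ 2 + 3) ^ 2)) x := by
  have hD := (two_mul_pow_four_sub_three_mul_sq_add_three_pos x).ne'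
  have hsq : 1 - x ^ 2 ≠ 0 := by nlinarith [hx.1, hx.2]
  have hnum := ((hasDerivAt_id' x).const_mul 2).fun_mul
    (((hasDerivAt_pow 2 x).const_mul 2).const_sub 3)
  have hden := (((hasDerivAt_pow 4 x).const_mul 2).fun_sub
    ((hasDerivAt_pow 2 x).const_mul 3)).add_const 3
  refine ((hasDerivAt_log_one_add_div_one_sub hx).fun_sub (hnum.fun_div hden hD)).congr_deriv ?_
  have hprod : (1 - x ^ 2) * (2 * x ^ 4 - 3 * x ^ 2 + 3) ^ 2 ≠ 0 :=
    mul_ne_zero hsq (pow_ne_zero 2 hD)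
  rw [div_sub_div _ _ hsq (pow_ne_zero 2 hD), div_eq_div_iff hprod hprod]
  ring

lemma two_mul_mul_lt_mul_log_one_add_div_one_sub {x : ℝ} (hx : x ∈ Ioo 0 1) :
    2 * x * (3 - 2 * x ^ 2) < (2 * x ^ 4 - 3 * x ^ 2 + 3) * log ((1 + x) / (1 - x)) := by
  have hderiv_pos : ∀ y ∈ Ioo (0 : ℝ) 1, 0 < 8 * y ^ 4 * (3 - 2 * y ^ 2) * (2 - y ^ 2) /
      ((1 - y ^ 2) * (2 * y ^ 4 - 3 * y ^ 2 + 3) ^ 2) := by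
    rintro y ⟨hy₀, hy₁⟩
    have : 0 < 1 - y ^ 2 := by nlinarith
    have : 0 < 2 - y ^ 2 := by nlinarith
    have : 0 < 3 - 2 * y ^ 2 := by nlinarith
    have := two_mul_pow_four_sub_three_mul_sq_add_three_pos y
    positivity
  have hlt := lt_of_hasDerivAt_pos
    (fun y hy ↦ hasDerivAt_log_one_add_div_one_sub_sub ⟨by linarith [hy.1], hy.2⟩)
    hderiv_pos hx
  simp only [add_zero, sub_zero, div_one, log_one, mul_zero, zero_mul, zero_div] at hlt
  rwa [sub_pos, div_lt_iff₀' (two_mul_pow_four_sub_three_mul_sq_add_three_pos x)] at hlt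

lemma hasDerivAt_one_sub_sq_div_mul_log_one_add_div_one_sub {x : ℝ} (hx : x ∈ Ioo 0 1) :
    HasDerivAt
      (fun x ↦ (1 - x ^ 2) / (4 * x * (3 - 2 * x ^ 2)) * log ((1 + x) / (1 - x)))
      ((2 * x * (3 - 2 * x ^ 2) - (2 * x ^ 4 - 3 * x ^ 2 + 3) * log ((1 + x) / (1 - x))) /
        (4 * x ^ 2 * (3 - 2 * x ^ 2) ^ 2)) x := by
  obtain ⟨h₀, h₁⟩ := hx
  have hsq : 1 - x ^ 2 ≠ 0 := by nlinarith
  have hden : 4 * x * (3 - 2 * x ^ 2) ≠ 0 := by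
    have : 0 < 3 - 2 * x ^ 2 := by nlinarith
    positivity
  have hnum := (hasDerivAt_pow 2 x).const_sub 1
  have hden' := ((hasDerivAt_id' x).const_mul 4).fun_mul
    (((hasDerivAt_pow 2 x).const_mul 2).const_sub 3)
  refine ((hnum.fun_div hden' hden).fun_mul
    (hasDerivAt_log_one_add_div_one_sub ⟨by linarith, h₁⟩)).congr_deriv ?_
  field_simp
  ring

/-- The function `x ↦ ((1-x²)/(4x(3-2x²))) log((1+x)/(1-x))` is strictly decreasing on
`(0,1)`; equivalently `(2x⁴-3x²+3) x log((1+x)/(1-x)) ≥ 2x²(3-2x²)` for `0 < x < 1`. -/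
theorem stmt12 :
    StrictAntiOn (fun x : ℝ =>
        (1 - x ^ 2) / (4 * x * (3 - 2 * x ^ 2)) * Real.log ((1 + x) / (1 - x)))
      (Set.Ioo (0 : ℝ) 1) ∧
    ∀ x : ℝ, 0 < x → x < 1 →
      2 * x ^ 2 * (3 - 2 * x ^ 2) ≤
        (2 * x ^ 4 - 3 * x ^ 2 + 3) * x * Real.log ((1 + x) / (1 - x)) := by
  have hderiv := @hasDerivAt_one_sub_sq_div_mul_log_one_add_div_one_sub
  refine ⟨?_, fun x h₀ h₁ ↦ ?_⟩
  · refine strictAntiOn_of_hasDerivWithinAt_neg (convex_Ioo 0 1)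
      (fun x hx ↦ (hderiv hx).continuousAt.continuousWithinAt)
      (fun x hx ↦ (hderiv (interior_subset hx)).hasDerivWithinAt) fun x hx ↦ ?_
    rw [interior_Ioo] at hx
    obtain ⟨h₀, h₁⟩ := hx
    have : 0 < 3 - 2 * x ^ 2 := by nlinarith
    exact div_neg_of_neg_of_pos
      (sub_neg.2 (two_mul_mul_lt_mul_log_one_add_div_one_sub ⟨h₀, h₁⟩)) (by positivity)
  · have := mul_lt_mul_of_pos_left (two_mul_mul_lt_mul_log_one_add_div_one_sub ⟨h₀, h₁⟩) h₀
    linarith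
end

section
/- Define d(h) = (h · log((1+√(1−4h))/(1−√(1−4h)))) / ((1+8h)·√(1−4h)) for h ∈ (0, 1/4). Then lim_{h→1/4⁻} d(h) = 1/6 and lim_{h→0⁺} d(h) = 0, and d is strictly increasing on (0, 1/4). -/
/-!
Substitute `x = √(1 - 4h) ∈ (0, 1)`, so that `h = (1 - x²)/4`, `1 + 8h = 3 - 2x²` and
`d(h) = g(x) := (1 - x²) L(x) / (4x(3 - 2x²))` with `L(x) = log (1 + x) - log (1 - x)`.
Since `L(x) ~ 2x` at `0` and `(1 - x) log (1 - x) → 0` at `1`, `g` tends to `1/6` at `0⁺` and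
to `0` at `1⁻`. The derivative `g'` has the sign of `2x(3 - 2x²) - (2x⁴ - 3x² + 3) L(x)`, which
is negative because `L(x) ≥ 2x + 2x³/3`, the first two terms of its power series with positive
coefficients. As `x` decreases in `h`, `d` increases.
-/

/-- The expected inverse root degree of the type-I PSHT, as a function of `h`. -/
noncomputable def dPSHT (h : ℝ) : ℝ :=
  h * Real.log ((1 + Real.sqrt (1 - 4 * h)) / (1 - Real.sqrt (1 - 4 * h))) /
    ((1 + 8 * h) * Real.sqrt (1 - 4 * h))

open Real Set Filter Topology

noncomputable def gPSHT (x : ℝ) : ℝ :=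
  (1 - x ^ 2) * (log (1 + x) - log (1 - x)) / (4 * x * (3 - 2 * x ^ 2))

lemma mapsTo_sqrt_one_sub_four_mul :
    MapsTo (fun h : ℝ => √(1 - 4 * h)) (Ioo 0 (1 / 4)) (Ioo 0 1) := by
  rintro h ⟨h0, h4⟩
  refine ⟨sqrt_pos.2 (by linarith), ?_⟩
  rw [sqrt_lt' one_pos]
  linarith

lemma strictAntiOn_sqrt_one_sub_four_mul :
    StrictAntiOn (fun h : ℝ => √(1 - 4 * h)) (Ioo 0 (1 / 4)) :=
  fun _ _ _ hb hab => sqrt_lt_sqrt (by linarith [hb.2]) (by linarith)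

lemma dPSHT_eq_gPSHT {h : ℝ} (hh : h ∈ Ioo (0 : ℝ) (1 / 4)) :
    dPSHT h = gPSHT √(1 - 4 * h) := by
  obtain ⟨hx₀, hx₁⟩ := mapsTo_sqrt_one_sub_four_mul hh
  set x := √(1 - 4 * h) with hx
  have hx2 : x ^ 2 = 1 - 4 * h := sq_sqrt (by linarith [hh.2])
  rw [dPSHT, gPSHT, ← hx, log_div (by linarith) (by linarith),
    show 1 - x ^ 2 = 4 * h by linarith, show 1 + 8 * h = 3 - 2 * x ^ 2 by linarith]
  field_simp

lemma hasDerivAt_log_one_add_sub_log_one_sub {x : ℝ} (hx : |x| < 1) :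
    HasDerivAt (fun y => log (1 + y) - log (1 - y)) (2 / (1 - x ^ 2)) x := by
  obtain ⟨hx₁, hx₂⟩ := abs_lt.1 hx
  have hp : 1 + x ≠ 0 := by linarith
  have hm : 1 - x ≠ 0 := by linarith
  have h₁ := ((hasDerivAt_id x).const_add 1).log hp
  have h₂ := ((hasDerivAt_id x).const_sub 1).log hm
  refine (h₁.sub h₂).congr_deriv ?_
  rw [id_eq, show 1 - x ^ 2 = (1 + x) * (1 - x) by ring]
  field_simp
  ring

lemma add_le_log_one_add_sub_log_one_sub {x : ℝ} (hx₀ : 0 ≤ x) (hx₁ : x < 1) :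
    2 * x + 2 / 3 * x ^ 3 ≤ log (1 + x) - log (1 - x) := by
  have hsum := hasSum_log_sub_log_of_abs_lt_one (abs_lt.2 ⟨by linarith, hx₁⟩)
  refine (sum_le_hasSum (Finset.range 2) (fun k _ => by positivity) hsum).trans_eq' ?_
  norm_num [Finset.sum_range_succ]

lemma mul_lt_mul_log_one_add_sub_log_one_sub {x : ℝ} (hx₀ : 0 < x) (hx₁ : x < 1) :
    2 * x * (3 - 2 * x ^ 2) < (2 * x ^ 4 - 3 * x ^ 2 + 3) * (log (1 + x) - log (1 - x)) :=
  calc 2 * x * (3 - 2 * x ^ 2)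
      < (2 * x ^ 4 - 3 * x ^ 2 + 3) * (2 * x + 2 / 3 * x ^ 3) := by nlinarith [pow_pos hx₀ 5]
    _ ≤ (2 * x ^ 4 - 3 * x ^ 2 + 3) * (log (1 + x) - log (1 - x)) := by
      gcongr
      · nlinarith [sq_nonneg (x ^ 2 - 3 / 4)]
      · exact add_le_log_one_add_sub_log_one_sub hx₀.le hx₁

lemma hasDerivAt_gPSHT {x : ℝ} (hx₀ : 0 < x) (hx₁ : x < 1) :
    HasDerivAt gPSHT
      ((2 * x * (3 - 2 * x ^ 2) - (2 * x ^ 4 - 3 * x ^ 2 + 3) * (log (1 + x) - log (1 - x)))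
        / (4 * x ^ 2 * (3 - 2 * x ^ 2) ^ 2)) x := by
  have hc : 0 < 3 - 2 * x ^ 2 := by nlinarith
  have hq : 1 - x ^ 2 ≠ 0 := by nlinarith
  have hL := hasDerivAt_log_one_add_sub_log_one_sub (abs_lt.2 ⟨by linarith, hx₁⟩)
  have hN := ((hasDerivAt_pow 2 x).const_sub 1).mul hL
  have hD := ((hasDerivAt_id x).const_mul 4).mul (((hasDerivAt_pow 2 x).const_mul 2).const_sub 3)
  refine (hN.div hD (by simp only [Pi.mul_apply, id_eq]; positivity)).congr_deriv ?_
  simp only [Pi.mul_apply, id_eq]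
  field_simp
  ring

lemma strictAntiOn_gPSHT : StrictAntiOn gPSHT (Ioo 0 1) := by
  refine strictAntiOn_of_deriv_neg (convex_Ioo 0 1)
    (fun x hx => (hasDerivAt_gPSHT hx.1 hx.2).continuousAt.continuousWithinAt) ?_
  rw [interior_Ioo]
  intro x ⟨hx₀, hx₁⟩
  rw [(hasDerivAt_gPSHT hx₀ hx₁).deriv]
  have hc : 0 < 3 - 2 * x ^ 2 := by nlinarith
  exact div_neg_of_neg_of_pos (by linarith [mul_lt_mul_log_one_add_sub_log_one_sub hx₀ hx₁])
    (by positivity)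

lemma tendsto_gPSHT_zero : Tendsto gPSHT (𝓝[>] 0) (𝓝 (1 / 6)) := by
  have hslope : Tendsto (fun x : ℝ => x⁻¹ * (log (1 + x) - log (1 - x))) (𝓝[>] 0) (𝓝 2) := by
    simpa using (hasDerivAt_log_one_add_sub_log_one_sub (x := 0) (by simp)).tendsto_slope_zero_right
  have hrest : Tendsto (fun x : ℝ => (1 - x ^ 2) / (4 * (3 - 2 * x ^ 2))) (𝓝[>] 0)
      (𝓝 (1 / 12)) := by
    have hcont : ContinuousAt (fun x : ℝ => (1 - x ^ 2) / (4 * (3 - 2 * x ^ 2))) 0 := by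
      fun_prop (disch := norm_num)
    refine tendsto_nhdsWithin_of_tendsto_nhds ?_
    convert hcont.tendsto using 2
    norm_num
  convert (hslope.mul hrest).congr' ?_ using 2
  · norm_num
  filter_upwards [Ioo_mem_nhdsGT one_pos] with x ⟨hx₀, hx₁⟩
  have hc : 3 - 2 * x ^ 2 ≠ 0 := by nlinarith
  rw [gPSHT]
  field_simp

lemma tendsto_gPSHT_one : Tendsto gPSHT (𝓝 1) (𝓝 0) := by
  have hform : gPSHT = fun x =>
      (1 + x) * ((1 - x) * log (1 + x) - (1 - x) * log (1 - x)) / (4 * x * (3 - 2 * x ^ 2)) := by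
    funext x
    rw [gPSHT]
    ring
  have hmul_log : ContinuousAt (fun x : ℝ => (1 - x) * log (1 - x)) 1 :=
    (continuous_mul_log.comp (continuous_sub_left 1)).continuousAt
  have hcont : ContinuousAt (fun x =>
      (1 + x) * ((1 - x) * log (1 + x) - (1 - x) * log (1 - x)) / (4 * x * (3 - 2 * x ^ 2))) 1 := by
    fun_prop (disch := norm_num)
  rw [hform]
  simpa using hcont.tendsto

/-- `d(h) → 1/6` as `h → 1/4⁻`, `d(h) → 0` as `h → 0⁺`, and `d` is strictly
increasing on `(0, 1/4)`. -/
theorem stmt14 :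
    Filter.Tendsto dPSHT (nhdsWithin (1 / 4 : ℝ) (Set.Iio (1 / 4))) (nhds (1 / 6)) ∧
    Filter.Tendsto dPSHT (nhdsWithin (0 : ℝ) (Set.Ioi 0)) (nhds 0) ∧
    StrictMonoOn dPSHT (Set.Ioo (0 : ℝ) (1 / 4)) := by
  set s : ℝ → ℝ := fun h => √(1 - 4 * h)
  have hd : EqOn (gPSHT ∘ s) dPSHT (Ioo 0 (1 / 4)) := fun h hh => (dPSHT_eq_gPSHT hh).symm
  have hs (a : ℝ) : Tendsto s (𝓝[Ioo 0 (1 / 4)] a) (𝓝[Ioo 0 1] (s a)) :=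
    (by fun_prop : Continuous s).continuousWithinAt.tendsto_nhdsWithin
      mapsTo_sqrt_one_sub_four_mul
  have hs₀ : s (1 / 4) = 0 := by norm_num [s]
  have hs₁ : s 0 = 1 := by norm_num [s]
  refine ⟨?_, ?_, ?_⟩
  · rw [← nhdsWithin_Ioo_eq_nhdsLT (by norm_num : (0 : ℝ) < 1 / 4)]
    refine (tendsto_gPSHT_zero.comp ?_).congr' (eventuallyEq_nhdsWithin_of_eqOn hd)
    simpa only [hs₀, nhdsWithin_Ioo_eq_nhdsGT one_pos] using hs (1 / 4)
  · rw [← nhdsWithin_Ioo_eq_nhdsGT (by norm_num : (0 : ℝ) < 1 / 4)]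
    refine (tendsto_gPSHT_one.comp ?_).congr' (eventuallyEq_nhdsWithin_of_eqOn hd)
    exact hs₁ ▸ (hs 0).mono_right nhdsWithin_le_nhds
  · exact (strictAntiOn_gPSHT.comp strictAntiOn_sqrt_one_sub_four_mul
      mapsTo_sqrt_one_sub_four_mul).congr hd
end
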